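/- In rank one (root system A₁ with parameter k), with D(p,k) the symmetric hypergeometric operator for the invariant quadratic p in the Jacobi polynomial setting, the Heckman raising operator G₊(k) = Δ⁻¹∘T(α^∨/2 + c, k)|_{sym} maps W-invariant Laurent polynomials to W-invariant Laurent polynomials and satisfies G₊(k)∘D(p,k) = D(p,k+1)∘G₊(k). -/

import Mathlib

/-- Evaluation of a Laurent polynomial (a finitely supported function
`ℤ →₀ ℂ` of coefficients) at a nonzero point `x`. -/
noncomputable def ev (f : ℤ →₀ ℂ) (x : ℂ) : ℂ := f.sum fun n a => a * x ^ n

-- coefficient multiplication by n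
noncomputable def th (f : ℤ →₀ ℂ) : ℤ →₀ ℂ := f.sum fun n a => Finsupp.single n ((n : ℂ) * a)
noncomputable def sh (c : ℤ) (f : ℤ →₀ ℂ) : ℤ →₀ ℂ := Finsupp.mapDomain (· + c) f
noncomputable def rf (f : ℤ →₀ ℂ) : ℤ →₀ ℂ := Finsupp.mapDomain (fun n => -n) f

lemma th_apply (f : ℤ →₀ ℂ) (n : ℤ) : th f n = (n : ℂ) * f n := by
  classical
  rw [th, Finsupp.sum_apply]
  rw [Finsupp.sum]
  simp only [Finsupp.single_apply]
  rw [Finset.sum_ite_eq' f.support n (fun m => (m : ℂ) * f m)]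
  by_cases h : n ∈ f.support
  · simp [h]
  · simp [h, Finsupp.notMem_support_iff.mp h]

lemma sh_apply (c : ℤ) (f : ℤ →₀ ℂ) (n : ℤ) : sh c f n = f (n - c) := by
  have := Finsupp.mapDomain_apply (add_left_injective c) f (n - c)
  simpa [sh, sub_add_cancel] using this

lemma rf_apply (f : ℤ →₀ ℂ) (n : ℤ) : rf f n = f (-n) := by
  have h : Function.Injective (fun n : ℤ => -n) := fun a b h => by simpa using h
  have := Finsupp.mapDomain_apply h f (-n)
  simpa [rf] using this

lemma ev_add (f g : ℤ →₀ ℂ) (x : ℂ) : ev (f + g) x = ev f x + ev g x := by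
  rw [ev, ev, ev]
  exact Finsupp.sum_add_index' (fun n => zero_mul _) (fun n a b => add_mul a b _)

lemma ev_zero (x : ℂ) : ev 0 x = 0 := by simp [ev]

lemma ev_sub (f g : ℤ →₀ ℂ) (x : ℂ) : ev (f - g) x = ev f x - ev g x := by
  rw [ev, ev, ev]
  exact Finsupp.sum_sub_index (fun n a b => sub_mul a b _)

lemma ev_smul (c : ℂ) (f : ℤ →₀ ℂ) (x : ℂ) : ev (c • f) x = c * ev f x := by
  rw [ev, ev, Finsupp.sum_smul_index (h := fun n a => a * x ^ n) (fun n => zero_mul _), Finsupp.mul_sum]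
  congr 1; ext n a; ring

lemma ev_single (n : ℤ) (a : ℂ) (x : ℂ) : ev (Finsupp.single n a) x = a * x ^ n := by
  rw [ev]; exact Finsupp.sum_single_index (zero_mul _)

lemma ev_finset_sum {ι : Type*} (s : Finset ι) (g : ι → ℤ →₀ ℂ) (x : ℂ) :
    ev (∑ i ∈ s, g i) x = ∑ i ∈ s, ev (g i) x := by
  classical
  induction s using Finset.induction with
  | empty => simp [ev_zero]
  | @insert a s' h ih => rw [Finset.sum_insert h, Finset.sum_insert h, ev_add, ih]

lemma ev_th (f : ℤ →₀ ℂ) (x : ℂ) :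
    ev (th f) x = f.sum fun n a => a * (n : ℂ) * x ^ n := by
  rw [th, Finsupp.sum, ev_finset_sum, Finsupp.sum]
  refine Finset.sum_congr rfl fun n _ => ?_
  rw [ev_single]; ring

lemma ev_sh (c : ℤ) (f : ℤ →₀ ℂ) (x : ℂ) (hx : x ≠ 0) :
    ev (sh c f) x = x ^ c * ev f x := by
  rw [sh, ev, Finsupp.sum_mapDomain_index (h := fun n a => a * x ^ n) (fun n => zero_mul _) (fun n a b => add_mul a b _)]
  rw [ev, Finsupp.mul_sum]
  refine Finsupp.sum_congr fun n _ => ?_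
  rw [zpow_add₀ hx]; ring

lemma ev_rf (f : ℤ →₀ ℂ) (x : ℂ) (hx : x ≠ 0) : ev (rf f) x = ev f x⁻¹ := by
  rw [rf, ev, Finsupp.sum_mapDomain_index (h := fun n a => a * x ^ n) (fun n => zero_mul _) (fun n a b => add_mul a b _)]
  rw [ev]
  refine Finsupp.sum_congr fun n _ => ?_
  rw [zpow_neg, inv_zpow]

lemma ev_eq_zero_of (f : ℤ →₀ ℂ) (h : ∀ x : ℂ, x ≠ 0 → x ≠ 1 → x ≠ -1 → ev f x = 0) :
    f = 0 := by
  classical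
  by_contra hf
  obtain ⟨n₀, hn₀⟩ := Finsupp.support_nonempty_iff.mpr hf
  set s := f.support with hs
  have hne : s.Nonempty := ⟨n₀, hn₀⟩
  set m := s.min' hne with hm
  have hge : ∀ n ∈ s, 0 ≤ n - m := fun n hn => sub_nonneg.mpr (s.min'_le n hn)
  set p : Polynomial ℂ := ∑ n ∈ s, Polynomial.C (f n) * Polynomial.X ^ (n - m).toNat with hp
  have hpev : ∀ x : ℂ, x ≠ 0 → p.eval x = x ^ (-m) * ev f x := by
    intro x hx
    rw [hp, Polynomial.eval_finset_sum, ev, Finsupp.sum, Finset.mul_sum]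
    refine Finset.sum_congr rfl fun n hn => ?_
    rw [Polynomial.eval_mul, Polynomial.eval_C, Polynomial.eval_pow, Polynomial.eval_X]
    rw [← zpow_natCast x, Int.toNat_of_nonneg (hge n hn), zpow_sub₀ hx, zpow_neg]
    field_simp
  have hproots : {x : ℂ | p.IsRoot x}.Infinite := by
    have hsubset : ({0, 1, -1} : Set ℂ)ᶜ ⊆ {x : ℂ | p.IsRoot x} := by
      intro x hx
      simp only [Set.mem_compl_iff, Set.mem_insert_iff, Set.mem_singleton_iff, not_or] at hx
      obtain ⟨h0, h1, h2⟩ := hx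
      simp only [Set.mem_setOf_eq, Polynomial.IsRoot]
      rw [hpev x h0, h x h0 h1 h2, mul_zero]
    exact Set.Infinite.mono hsubset (Set.Finite.infinite_compl (Set.toFinite _))
  have hp0 : p = 0 := Polynomial.eq_zero_of_infinite_isRoot p hproots
  have : f n₀ = 0 := by
    have hc : p.coeff (n₀ - m).toNat = f n₀ := by
      rw [hp, Polynomial.finset_sum_coeff]
      rw [Finset.sum_eq_single n₀]
      · simp [Polynomial.coeff_C_mul, Polynomial.coeff_X_pow]
      · intro n hn hne'
        rw [Polynomial.coeff_C_mul, Polynomial.coeff_X_pow, if_neg, mul_zero]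
        intro hEq
        have a1 := hge n hn
        have a2 := hge n₀ hn₀
        omega
      · intro h'; exact absurd hn₀ h'
    rw [hp0] at hc
    simpa using hc.symm
  exact (Finsupp.mem_support_iff.mp hn₀) this

lemma ev_inj (f g : ℤ →₀ ℂ)
    (h : ∀ x : ℂ, x ≠ 0 → x ≠ 1 → x ≠ -1 → ev f x = ev g x) : f = g := by
  have := ev_eq_zero_of (f - g) (fun x h0 h1 h2 => by rw [ev_sub, h x h0 h1 h2, sub_self])
  exact sub_eq_zero.mp this

lemma ev_neg (f : ℤ →₀ ℂ) (x : ℂ) : ev (-f) x = - ev f x := by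
  have := ev_sub 0 f x; simpa [ev_zero] using this

lemma th_add (f g : ℤ →₀ ℂ) : th (f + g) = th f + th g := by
  ext n; simp [th_apply]; ring

lemma th_sub (f g : ℤ →₀ ℂ) : th (f - g) = th f - th g := by
  ext n; simp [th_apply]; ring

lemma th_smul (c : ℂ) (f : ℤ →₀ ℂ) : th (c • f) = c • th f := by
  ext n; simp [th_apply]; ring

lemma th_neg (f : ℤ →₀ ℂ) : th (-f) = - th f := by
  ext n; simp [th_apply]

lemma th_sh (c : ℤ) (w : ℤ →₀ ℂ) : th (sh c w) = sh c (th w) + (c : ℂ) • sh c w := by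
  ext n; simp [th_apply, sh_apply]; push_cast; ring

lemma rf_th (g : ℤ →₀ ℂ) : rf (th g) = -th (rf g) := by
  ext n
  rw [Finsupp.neg_apply, rf_apply, th_apply, th_apply, rf_apply]
  push_cast; ring

lemma rf_sh (c : ℤ) (w : ℤ →₀ ℂ) : rf (sh c w) = sh (-c) (rf w) := by
  ext n; simp [rf_apply, sh_apply]; congr 1; ring

lemma rf_sub (f g : ℤ →₀ ℂ) : rf (f - g) = rf f - rf g := by
  ext n; simp [rf_apply]

lemma rf_add (f g : ℤ →₀ ℂ) : rf (f + g) = rf f + rf g := by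
  ext n; simp [rf_apply]

lemma rf_smul (c : ℂ) (f : ℤ →₀ ℂ) : rf (c • f) = c • rf f := by
  ext n; simp [rf_apply]

/-- On a symmetric Laurent polynomial, the Dunkl–Cherednik operator is `θ - k`. -/
lemma op_sym_eq (k' : ℂ) (Top : (ℤ →₀ ℂ) → (ℤ →₀ ℂ))
    (hTop : ∀ (f : ℤ →₀ ℂ) (x : ℂ), x ≠ 0 → x ≠ 1 → x ≠ -1 →
      ev (Top f) x = (f.sum fun n a => a * (n : ℂ) * x ^ n) - k' * ev f x
        + 2 * k' / (1 - x⁻¹ ^ 2) * (ev f x - ev f x⁻¹))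
    (g : ℤ →₀ ℂ) (hg : rf g = g) : Top g = th g - k' • g := by
  apply ev_inj; intro x h0 h1 h2
  rw [hTop g x h0 h1 h2, ev_sub, ev_smul, ← ev_th]
  have hsy : ev g x⁻¹ = ev g x := by rw [← ev_rf g x h0, hg]
  rw [hsy, sub_self, mul_zero, add_zero]

/-- Rank one (A₁, parameter `k`): Heckman's raising operator
`G₊(k) = Δ⁻¹ ∘ T(π⁺(k),k)` (here `T` is the Dunkl–Cherednik operator
`T(α^∨,k) = X∂_X − k + 2k(1−X⁻²)⁻¹(1−s)` and `π⁺(k) = α^∨ + k`, so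
`T(π⁺(k),k) = T + k`) maps `W`-invariant Laurent polynomials to `W`-invariant
Laurent polynomials and intertwines `D(p,k)` with `D(p,k+1)` for the invariant
quadratic `p = (α^∨)²`, i.e. `G₊(k) ∘ T² = (T')² ∘ G₊(k)` on invariants, where
`T'` has parameter `k+1`. -/
theorem stmt16 (k : ℂ) (T T' G : (ℤ →₀ ℂ) → (ℤ →₀ ℂ))
    (hT : ∀ (f : ℤ →₀ ℂ) (x : ℂ), x ≠ 0 → x ≠ 1 → x ≠ -1 →
      ev (T f) x = (f.sum fun n a => a * (n : ℂ) * x ^ n) - k * ev f x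
        + 2 * k / (1 - x⁻¹ ^ 2) * (ev f x - ev f x⁻¹))
    (hT' : ∀ (f : ℤ →₀ ℂ) (x : ℂ), x ≠ 0 → x ≠ 1 → x ≠ -1 →
      ev (T' f) x = (f.sum fun n a => a * (n : ℂ) * x ^ n) - (k + 1) * ev f x
        + 2 * (k + 1) / (1 - x⁻¹ ^ 2) * (ev f x - ev f x⁻¹))
    (hG : ∀ f : ℤ →₀ ℂ, (∀ n : ℤ, f n = f (-n)) → ∀ x : ℂ,
      x ≠ 0 → x ≠ 1 → x ≠ -1 →
      ev (G f) x = (x - x⁻¹)⁻¹ * (ev (T f) x + k * ev f x)) :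
    ∀ f : ℤ →₀ ℂ, (∀ n : ℤ, f n = f (-n)) →
      (∀ n : ℤ, G f n = G f (-n)) ∧ G (T (T f)) = T' (T' (G f)) := by
  intro f hf
  set u := G f with hu0
  have hfs : rf f = f := Finsupp.ext fun n => by rw [rf_apply, ← hf]
  -- basic nonvanishing facts for a good point x
  have hgood : ∀ x : ℂ, x ≠ 0 → x ≠ 1 → x ≠ -1 →
      (x - x⁻¹ ≠ 0 ∧ 1 - x⁻¹ ^ 2 ≠ 0 ∧ x⁻¹ ≠ 0 ∧ x⁻¹ ≠ 1 ∧ x⁻¹ ≠ -1 ∧ x ^ 2 - 1 ≠ 0) := by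
    intro x h0 h1 h2
    have hsq : x ^ 2 ≠ 1 := by
      intro h
      have hfac : (x - 1) * (x + 1) = 0 := by linear_combination h
      rcases mul_eq_zero.mp hfac with h' | h'
      · exact h1 (by linear_combination h')
      · exact h2 (by linear_combination h')
    refine ⟨?_, ?_, inv_ne_zero h0, ?_, ?_, sub_ne_zero.mpr hsq⟩
    · intro h
      apply hsq
      have h' := sub_eq_zero.mp h
      field_simp at h'
      linear_combination h'
    · intro h
      apply hsq
      have h' : x ^ 2 * (1 - x⁻¹ ^ 2) = x ^ 2 - 1 := by field_simp
      rw [h, mul_zero] at h'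
      linear_combination -h'
    · intro h; exact h1 (by rw [← inv_inv x, h]; norm_num)
    · intro h; exact h2 (by rw [← inv_inv x, h]; norm_num)
  -- Step 1: T f = θ f - k f
  have hTf : T f = th f - k • f := op_sym_eq k T hT f hfs
  -- evaluation of u
  have hu : ∀ x : ℂ, x ≠ 0 → x ≠ 1 → x ≠ -1 →
      ev u x = (x - x⁻¹)⁻¹ * ev (th f) x := by
    intro x h0 h1 h2
    rw [hu0, hG f hf x h0 h1 h2, hTf, ev_sub, ev_smul]
    ring_nf
  -- Step 2: sh 1 u - sh (-1) u = th f
  have hrel : sh 1 u - sh (-1) u = th f := by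
    apply ev_inj; intro x h0 h1 h2
    obtain ⟨hd, hs2, hi0, hi1, hi2, hx21⟩ := hgood x h0 h1 h2
    rw [ev_sub, ev_sh 1 u x h0, ev_sh (-1) u x h0, hu x h0 h1 h2]
    rw [zpow_one, zpow_neg_one]
    have e : x * ((x - x⁻¹)⁻¹ * ev (th f) x) - x⁻¹ * ((x - x⁻¹)⁻¹ * ev (th f) x)
        = (x - x⁻¹) * ((x - x⁻¹)⁻¹ * ev (th f) x) := by ring
    rw [e, ← mul_assoc, mul_inv_cancel₀ hd, one_mul]
  -- Step 3: u is symmetric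
  have hth_inv : ∀ x : ℂ, x ≠ 0 → ev (th f) x⁻¹ = - ev (th f) x := by
    intro x h0
    rw [← ev_rf (th f) x h0, rf_th, hfs, ev_neg]
  have hus : rf u = u := by
    apply ev_inj; intro x h0 h1 h2
    obtain ⟨hd, hs2, hi0, hi1, hi2, hx21⟩ := hgood x h0 h1 h2
    rw [ev_rf u x h0, hu x⁻¹ hi0 hi1 hi2, hu x h0 h1 h2, inv_inv, hth_inv x h0]
    have : x⁻¹ - x = -(x - x⁻¹) := by ring
    rw [this, inv_neg]
    ring
  have husym : ∀ n : ℤ, u n = u (-n) := fun n => by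
    conv_lhs => rw [← hus]
    rw [rf_apply]
  -- coefficient relation
  have hr : ∀ n : ℤ, u (n - 1) - u (n + 1) = (n : ℂ) * f n := by
    intro n
    have := congrArg (fun v : ℤ →₀ ℂ => v n) hrel
    simpa [sh_apply, th_apply, sub_neg_eq_add] using this
  -- Step 4: T (T f) = h
  set h : ℤ →₀ ℂ := th (th f) - (2 * k) • th f + k ^ 2 • f + (4 * k) • sh 1 u with hdef
  have hTTf : T (T f) = h := by
    rw [hTf]
    apply ev_inj; intro x h0 h1 h2
    obtain ⟨hd, hs2, hi0, hi1, hi2, hx21⟩ := hgood x h0 h1 h2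
    rw [hT _ x h0 h1 h2, ← ev_th]
    have e1 : th (th f - k • f) = th (th f) - k • th f := by
      rw [th_sub, th_smul]
    have e2 : rf (th f - k • f) = -th f - k • f := by
      rw [rf_sub, rf_smul, rf_th, hfs]
    have e3 : ev (th f - k • f) x⁻¹ = - ev (th f) x - k * ev f x := by
      rw [← ev_rf _ x h0, e2, ev_sub, ev_smul, ev_neg]
    have e4 : ev (th f) x = (x - x⁻¹) * ev u x := by
      rw [hu x h0 h1 h2, ← mul_assoc, mul_inv_cancel₀ hd, one_mul]
    rw [e1, e3, hdef]
    rw [ev_add, ev_add, ev_sub, ev_sub, ev_smul, ev_smul, ev_smul, ev_smul, ev_sub, ev_smul,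
      ev_sh 1 u x h0, zpow_one, e4]
    field_simp
    ring
  -- Step 5: h is symmetric
  have hhs : rf h = h := by
    ext n
    rw [rf_apply, hdef]
    simp only [Finsupp.add_apply, Finsupp.sub_apply, Finsupp.smul_apply, smul_eq_mul,
      th_apply, sh_apply]
    have a1 : f (-n) = f n := (hf n).symm
    have a2 : u (-n - 1) = u (n + 1) := by
      rw [husym (n+1)]; congr 1; ring
    have a3 := hr n
    rw [a1, a2]
    push_cast
    linear_combination (-4) * k * a3
  have hhsym : ∀ n : ℤ, h n = h (-n) := fun n => by
    conv_lhs => rw [← hhs]; rw [rf_apply]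
  -- Step 6: T' u = θ u - (k+1) u
  have hT'u : T' u = th u - (k + 1) • u := op_sym_eq (k + 1) T' hT' u hus
  -- final identity
  refine ⟨husym, ?_⟩
  rw [hTTf, hT'u]
  apply ev_inj; intro x h0 h1 h2
  obtain ⟨hd, hs2, hi0, hi1, hi2, hx21⟩ := hgood x h0 h1 h2
  -- LHS
  have L1 : ev (G h) x = (x - x⁻¹)⁻¹ * ev (th h) x := by
    rw [hG h hhsym x h0 h1 h2, hT h x h0 h1 h2, ← ev_th]
    have : ev h x⁻¹ = ev h x := by rw [← ev_rf h x h0, hhs]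
    rw [this, sub_self, mul_zero, add_zero]
    ring
  -- θ h in terms of u
  have thh_eq : th h = (sh 1 (th (th u)) - sh (-1) (th (th u)))
      + (2 * (k + 1)) • (sh 1 (th u) + sh (-1) (th u))
      + ((k + 1) ^ 2) • (sh 1 u - sh (-1) u) := by
    ext n
    rw [th_apply, hdef]
    simp only [th_apply, sh_apply, Finsupp.add_apply, Finsupp.sub_apply, Finsupp.smul_apply,
      smul_eq_mul, sub_neg_eq_add]
    push_cast
    linear_combination (-(n : ℂ) ^ 2 + 2 * k * (n : ℂ) - k ^ 2) * hr n
  have e3 : ev (th h) x =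
      (x - x⁻¹) * ev (th (th u)) x + 2 * (k + 1) * (x + x⁻¹) * ev (th u) x
        + (k + 1) ^ 2 * (x - x⁻¹) * ev u x := by
    rw [thh_eq]
    simp only [ev_add, ev_sub, ev_smul, ev_sh 1 _ x h0, ev_sh (-1) _ x h0, zpow_one, zpow_neg_one]
    ring
  -- RHS
  have R1 : ev (T' (th u - (k + 1) • u)) x =
      ev (th (th u)) x - 2 * (k + 1) * ev (th u) x + (k + 1) ^ 2 * ev u x
        + 2 * (k + 1) / (1 - x⁻¹ ^ 2) * (2 * ev (th u) x) := by
    rw [hT' _ x h0 h1 h2, ← ev_th]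
    have f1 : th (th u - (k + 1) • u) = th (th u) - (k + 1) • th u := by
      rw [th_sub, th_smul]
    have f2 : rf (th u - (k + 1) • u) = -th u - (k + 1) • u := by
      rw [rf_sub, rf_smul, rf_th, hus]
    have f3 : ev (th u - (k + 1) • u) x⁻¹ = - ev (th u) x - (k + 1) * ev u x := by
      rw [← ev_rf _ x h0, f2, ev_sub, ev_smul, ev_neg]
    rw [f1, f3, ev_sub, ev_smul, ev_sub, ev_smul]
    ring
  rw [L1, R1, e3, div_eq_mul_inv]
  have ht : (x - x⁻¹) * (x - x⁻¹)⁻¹ = 1 := mul_inv_cancel₀ hd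
  have hxv : (1 - x⁻¹ ^ 2)⁻¹ = x * (x - x⁻¹)⁻¹ := by
    have e : (1 : ℂ) - x⁻¹ ^ 2 = x⁻¹ * (x - x⁻¹) := by field_simp
    rw [e, mul_inv, inv_inv]
  rw [hxv]
  linear_combination (ev (th (th u)) x + (k + 1) ^ 2 * ev u x
    - 2 * (k + 1) * ev (th u) x) * ht
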